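/- arXiv:1601.07686 — 4 statements merged into one kernel-verified Lean document; each statement's English description precedes it below -/
import Mathlib

section
/- If c > 0 then the function x ↦ ζ(x;c) is strictly monotonically increasing on ℝ, and if c < 0 it is strictly monotonically decreasing. -/
noncomputable def zeta (x c : ℝ) : ℝ :=
  -Real.log ((Real.exp (x / 2 - c) + Real.exp (-x / 2 + c)) /
    (Real.exp (x / 2 + c) + Real.exp (-x / 2 - c)))

/-! With `y = exp x`, `exp (ζ(x;c)) = (e^c y + e^{-c}) / (e^{-c} y + e^c)`, a Möbius map of `y`
whose determinant `e^{2c} - e^{-2c}` has the sign of `c`; so for `c > 0` it is increasing on `y > 0`.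
The case `c < 0` follows from the odd symmetry `ζ(x;-c) = -ζ(x;c)`. -/

open Real Set

lemma strictMonoOn_mul_add_div_mul_add_swap {a b : ℝ} (hb : 0 ≤ b) (hba : b < a) :
    StrictMonoOn (fun y => (a * y + b) / (b * y + a)) (Ioi 0) := by
  intro y hy z hz hyz
  simp only [mem_Ioi] at hy hz
  have ha : 0 < a := hb.trans_lt hba
  rw [div_lt_div_iff₀ (by positivity) (by positivity)]
  nlinarith [mul_pos (sub_pos.2 hyz) (mul_pos (sub_pos.2 hba) (add_pos_of_nonneg_of_pos hb ha))]

lemma zeta_eq_log_div (x c : ℝ) :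
    zeta x c = log ((exp c * exp x + exp (-c)) / (exp (-c) * exp x + exp c)) := by
  have hnum : exp (x / 2 + c) + exp (-x / 2 - c) = exp (-x / 2) * (exp c * exp x + exp (-c)) := by
    simp only [mul_add, ← exp_add]; ring_nf
  have hden : exp (x / 2 - c) + exp (-x / 2 + c) = exp (-x / 2) * (exp (-c) * exp x + exp c) := by
    simp only [mul_add, ← exp_add]; ring_nf
  rw [zeta, ← log_inv, inv_div, hnum, hden, mul_div_mul_left _ _ (exp_pos _).ne']

lemma zeta_neg (x c : ℝ) : zeta x (-c) = -zeta x c := by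
  simp only [zeta, ← log_inv, inv_div, sub_neg_eq_add, ← sub_eq_add_neg]

lemma zeta_strictMono {c : ℝ} (hc : 0 < c) : StrictMono fun x => zeta x c := by
  have hmob := strictMonoOn_mul_add_div_mul_add_swap (exp_pos (-c)).le (exp_lt_exp.2 (neg_lt_self hc))
  have hpos : MapsTo (fun y => (exp c * y + exp (-c)) / (exp (-c) * y + exp c)) (Ioi 0) (Ioi 0) :=
    fun y (hy : 0 < y) => mem_Ioi.2 (by positivity)
  intro x₁ x₂ hx
  simp only [zeta_eq_log_div]
  exact strictMonoOn_log.comp hmob hpos (exp_pos x₁) (exp_pos x₂) (exp_lt_exp.2 hx)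

theorem zeta_strictMono_strictAnti (c : ℝ) :
    (0 < c → StrictMono fun x => zeta x c) ∧ (c < 0 → StrictAnti fun x => zeta x c) := by
  refine ⟨zeta_strictMono, fun hc => ?_⟩
  have := (zeta_strictMono (neg_pos.2 hc)).neg
  simpa only [zeta_neg, neg_neg] using this
end

section
/- For every real c and all real x, |ζ(x;c)| ≤ 2|c|, i.e., the function ζ(·;c) is bounded in absolute value by 2|c|. -/
theorem zeta_abs_le (c x : ℝ) : |zeta x c| ≤ 2 * |c| := by
  unfold zeta
  have hD : 0 < Real.exp (x / 2 + c) + Real.exp (-x / 2 - c) := by positivity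
  have hN : 0 < Real.exp (x / 2 - c) + Real.exp (-x / 2 + c) := by positivity
  have hc1 : -c ≤ |c| := neg_le_abs c
  have hc2 : c ≤ |c| := le_abs_self c
  have h1 : Real.exp (x / 2 - c) + Real.exp (-x / 2 + c) ≤
      Real.exp (2 * |c|) * (Real.exp (x / 2 + c) + Real.exp (-x / 2 - c)) := by
    rw [mul_add, ← Real.exp_add, ← Real.exp_add]
    exact add_le_add (Real.exp_le_exp.2 (by linarith)) (Real.exp_le_exp.2 (by linarith))
  have h2 : Real.exp (-(2 * |c|)) * (Real.exp (x / 2 + c) + Real.exp (-x / 2 - c)) ≤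
      Real.exp (x / 2 - c) + Real.exp (-x / 2 + c) := by
    rw [mul_add, ← Real.exp_add, ← Real.exp_add]
    exact add_le_add (Real.exp_le_exp.2 (by linarith)) (Real.exp_le_exp.2 (by linarith))
  have key1 : Real.log ((Real.exp (x / 2 - c) + Real.exp (-x / 2 + c)) /
      (Real.exp (x / 2 + c) + Real.exp (-x / 2 - c))) ≤ 2 * |c| := by
    rw [← Real.log_exp (2 * |c|)]
    exact Real.log_le_log (div_pos hN hD) ((div_le_iff₀ hD).2 h1)
  have key2 : -(2 * |c|) ≤ Real.log ((Real.exp (x / 2 - c) + Real.exp (-x / 2 + c)) /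
      (Real.exp (x / 2 + c) + Real.exp (-x / 2 - c))) := by
    rw [← Real.log_exp (-(2 * |c|))]
    exact Real.log_le_log (Real.exp_pos _) ((le_div_iff₀ hD).2 h2)
  rw [abs_neg, abs_le]
  exact ⟨by linarith, key1⟩
end

section
/- Let f : ℝ → ℝ be a bounded differentiable monotone function with |f'(x)| < 1 for all x. Then the fixed-point iteration x_{k+1} = f(x_k) converges to the unique fixed point of f from any initial value x₀. -/
open Set Filter

lemma my_contr (f : ℝ → ℝ) (hdiff : Differentiable ℝ f) (hderiv : ∀ x, |deriv f x| < 1) :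
    ∀ x y : ℝ, x ≠ y → |f x - f y| < |x - y| := by
  have key : ∀ x y : ℝ, x < y → |f x - f y| < |x - y| := by
    intro x y h
    obtain ⟨c, _, hc⟩ := exists_deriv_eq_slope f h (hdiff.continuous.continuousOn)
      (hdiff.differentiableOn)
    have hne : y - x ≠ 0 := sub_ne_zero.2 (ne_of_gt h)
    rw [eq_div_iff hne] at hc
    have hy : f y - f x = deriv f c * (y - x) := hc.symm
    have : |f x - f y| = |deriv f c| * |x - y| := by
      rw [abs_sub_comm, hy, abs_mul, abs_sub_comm y x]
    rw [this]
    have hxy : (0:ℝ) < |x - y| := abs_pos.2 (by linarith)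
    calc |deriv f c| * |x - y| < 1 * |x - y| := by
          exact mul_lt_mul_of_pos_right (hderiv c) hxy
      _ = |x - y| := one_mul _
  intro x y hxy
  rcases lt_or_gt_of_ne hxy with h | h
  · exact key x y h
  · rw [abs_sub_comm, abs_sub_comm x y]; exact key y x h

lemma my_mono_iter (f : ℝ → ℝ) (hc : Continuous f) (hmono : Monotone f) (C : ℝ)
    (hC : ∀ x, |f x| ≤ C) (x0 : ℝ) :
    ∃ L, f L = L ∧ Tendsto (fun k => f^[k] x0) atTop (nhds L) := by
  set u : ℕ → ℝ := fun k => f^[k] x0 with hu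
  have hshift : ∀ k, u (k + 1) = f (u k) := by
    intro k; simp [hu, Function.iterate_succ_apply']
  rcases lt_trichotomy (f x0) x0 with h | h | h
  · -- decreasing
    have hstep : ∀ k, u (k + 1) ≤ u k := by
      intro k
      induction k with
      | zero => simpa [hu] using h.le
      | succ n ih =>
        have h1 : f (u (n+1)) ≤ f (u n) := hmono ih
        rwa [← hshift (n+1), ← hshift n] at h1
    have hanti : Antitone u := antitone_nat_of_succ_le hstep
    have hbdd : BddBelow (range u) := by
      refine ⟨min x0 (-C), ?_⟩
      rintro _ ⟨k, rfl⟩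
      cases k with
      | zero => simpa [hu] using min_le_left _ _
      | succ n =>
        rw [hshift]
        exact le_trans (min_le_right _ _) (neg_le_of_abs_le (hC _))
    have hlim := tendsto_atTop_ciInf hanti hbdd
    refine ⟨_, ?_, hlim⟩
    have h1 : Tendsto (fun k => u (k + 1)) atTop (nhds (⨅ i, u i)) :=
      hlim.comp (tendsto_add_atTop_nat 1)
    have h2 : Tendsto (fun k => f (u k)) atTop (nhds (f (⨅ i, u i))) :=
      (hc.tendsto _).comp hlim
    have : Tendsto (fun k => u (k + 1)) atTop (nhds (f (⨅ i, u i))) := by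
      simpa only [hshift] using h2
    exact tendsto_nhds_unique this h1
  · refine ⟨x0, h, ?_⟩
    have hconst : u = fun _ => x0 := funext fun k => Function.iterate_fixed h k
    rw [hconst]
    exact tendsto_const_nhds
  · -- increasing
    have hstep : ∀ k, u k ≤ u (k + 1) := by
      intro k
      induction k with
      | zero => simpa [hu] using h.le
      | succ n ih =>
        have h1 : f (u n) ≤ f (u (n+1)) := hmono ih
        rwa [← hshift (n+1), ← hshift n] at h1
    have hmon : Monotone u := monotone_nat_of_le_succ hstep
    have hbdd : BddAbove (range u) := by
      refine ⟨max x0 C, ?_⟩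
      rintro _ ⟨k, rfl⟩
      cases k with
      | zero => simpa [hu] using le_max_left _ _
      | succ n =>
        rw [hshift]
        exact le_trans (le_of_abs_le (hC _)) (le_max_right _ _)
    have hlim := tendsto_atTop_ciSup hmon hbdd
    refine ⟨_, ?_, hlim⟩
    have h1 : Tendsto (fun k => u (k + 1)) atTop (nhds (⨆ i, u i)) :=
      hlim.comp (tendsto_add_atTop_nat 1)
    have h2 : Tendsto (fun k => f (u k)) atTop (nhds (f (⨆ i, u i))) :=
      (hc.tendsto _).comp hlim
    have : Tendsto (fun k => u (k + 1)) atTop (nhds (f (⨆ i, u i))) := by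
      simpa only [hshift] using h2
    exact tendsto_nhds_unique this h1

theorem iterates_converge_to_unique_fixed_point (f : ℝ → ℝ) (hdiff : Differentiable ℝ f)
    (hmono : Monotone f ∨ Antitone f) (hderiv : ∀ x, |deriv f x| < 1)
    (hbdd : ∃ C : ℝ, ∀ x, |f x| ≤ C) :
    ∃ xs : ℝ, f xs = xs ∧ (∀ y, f y = y → y = xs) ∧
      ∀ x0 : ℝ, Filter.Tendsto (fun k => f^[k] x0) Filter.atTop (nhds xs) := by
  obtain ⟨C, hC⟩ := hbdd
  have hcont : Continuous f := hdiff.continuous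
  have hcontr := my_contr f hdiff hderiv
  -- existence of fixed point
  have hC0 : (0:ℝ) ≤ C := (abs_nonneg _).trans (hC 0)
  obtain ⟨xs, hxs_mem, hxs⟩ : ∃ x ∈ Icc (-(C+1)) (C+1), f x - x = 0 := by
    have hab : (-(C+1) : ℝ) ≤ C + 1 := by linarith
    have hgc : ContinuousOn (fun x => f x - x) (Icc (-(C+1)) (C+1)) :=
      (hcont.sub continuous_id).continuousOn
    have := intermediate_value_Icc' hab hgc
    have hmem : (0:ℝ) ∈ Icc ((fun x => f x - x) (C+1)) ((fun x => f x - x) (-(C+1))) := by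
      constructor
      · have := hC (C+1); simp only; linarith [le_of_abs_le this]
      · have := hC (-(C+1)); simp only; linarith [neg_le_of_abs_le this]
    obtain ⟨x, hx1, hx2⟩ := this hmem
    exact ⟨x, hx1, hx2⟩
  have hfix : f xs = xs := by linarith [hxs]
  have huniq : ∀ y, f y = y → y = xs := by
    intro y hy
    by_contra hne
    have := hcontr y xs hne
    rw [hy, hfix] at this
    exact lt_irrefl _ this
  refine ⟨xs, hfix, huniq, ?_⟩
  intro x0
  rcases hmono with hm | ha
  · obtain ⟨L, hL, hLt⟩ := my_mono_iter f hcont hm C hC x0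
    rwa [huniq L hL] at hLt
  · -- antitone: use f ∘ f
    set h : ℝ → ℝ := f ∘ f with hh
    have hhmono : Monotone h := ha.comp ha
    have hhcont : Continuous h := hcont.comp hcont
    have hhC : ∀ x, |h x| ≤ C := fun x => hC _
    have hhfix : h xs = xs := by simp [hh, Function.comp, hfix]
    have hcontr_le : ∀ x y : ℝ, |f x - f y| ≤ |x - y| := by
      intro x y
      by_cases hxy : x = y
      · simp [hxy]
      · exact (hcontr x y hxy).le
    have hhuniq : ∀ y, h y = y → y = xs := by
      intro y hy
      by_contra hne
      have h1 : |h y - h xs| < |y - xs| := by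
        calc |f (f y) - f (f xs)| ≤ |f y - f xs| := hcontr_le _ _
          _ < |y - xs| := hcontr y xs hne
      rw [hy, hhfix] at h1
      exact lt_irrefl _ h1
    have heven : Tendsto (fun k => h^[k] x0) atTop (nhds xs) := by
      obtain ⟨L, hL, hLt⟩ := my_mono_iter h hhcont hhmono C hhC x0
      rwa [hhuniq L hL] at hLt
    have hodd : Tendsto (fun k => h^[k] (f x0)) atTop (nhds xs) := by
      obtain ⟨L, hL, hLt⟩ := my_mono_iter h hhcont hhmono C hhC (f x0)
      rwa [hhuniq L hL] at hLt
    have hiter2 : ∀ k, h^[k] = f^[2 * k] := by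
      intro k
      rw [Function.iterate_mul]
      rfl
    rw [Metric.tendsto_atTop] at heven hodd ⊢
    intro ε hε
    obtain ⟨N1, hN1⟩ := heven ε hε
    obtain ⟨N2, hN2⟩ := hodd ε hε
    refine ⟨2 * max N1 N2 + 2, ?_⟩
    intro n hn
    rcases Nat.even_or_odd n with ⟨m, hm⟩ | ⟨m, hm⟩
    · have hmge : N1 ≤ m := by omega
      have := hN1 m hmge
      rw [hiter2] at this
      rwa [show n = 2 * m by omega]
    · have hmge : N2 ≤ m := by omega
      have := hN2 m hmge
      rw [hiter2] at this
      rwa [show n = 2 * m + 1 by omega, Function.iterate_succ_apply]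
end

section
/- Let g_j(x) = b_j - ζ(x - a_j; c_j) for j = 1, ..., M with real parameters a_j, b_j, c_j, where ζ(x;c) = -log((e^{x/2-c}+e^{-x/2+c})/(e^{x/2+c}+e^{-x/2-c})). Then the composition G = g_M ∘ ⋯ ∘ g_1 has a unique fixed point x_s, and for any initial value x₀ the iterates x_{k+1} = G(x_k) converge to x_s as k → ∞. -/
noncomputable def gRing {M : ℕ} (a b c : Fin M → ℝ) (j : Fin M) : ℝ → ℝ :=
  fun x => b j - zeta (x - a j) (c j)

/-- `G = g_M ∘ ⋯ ∘ g_1`, the one-complete-turn map of the forward recursion. -/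
noncomputable def GRing {M : ℕ} (a b c : Fin M → ℝ) : ℝ → ℝ :=
  (List.ofFn (gRing a b c)).foldl (fun acc g => g ∘ acc) id

/-! Writing `ζ(x; c) = log cosh (x/2 + c) - log cosh (x/2 - c)`, its derivative
`(tanh (x/2 + c) - tanh (x/2 - c)) / 2` is bounded by `|tanh c| < 1`. Hence every `g_j` is a
contraction, `G` is a contraction with constant `(max_j |tanh c_j|) ^ M`, and the Banach fixed
point theorem gives the unique fixed point and the convergence of the iterates. -/

open Real

lemma zeta_eq_log_cosh_sub (x c : ℝ) :
    zeta x c = log (cosh (x / 2 + c)) - log (cosh (x / 2 - c)) := by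
  have two_cosh (u : ℝ) : exp u + exp (-u) = 2 * cosh u := by rw [cosh_eq]; ring
  rw [zeta, show -x / 2 + c = -(x / 2 - c) by ring, show -x / 2 - c = -(x / 2 + c) by ring,
    two_cosh, two_cosh, log_div (by positivity) (by positivity),
    log_mul two_ne_zero (cosh_pos _).ne', log_mul two_ne_zero (cosh_pos _).ne']
  ring

lemma hasDerivAt_zeta (x c : ℝ) :
    HasDerivAt (zeta · c) ((tanh (x / 2 + c) - tanh (x / 2 - c)) / 2) x := by
  have hlog (s : ℝ) : HasDerivAt (fun y => log (cosh (y / 2 + s))) (tanh (x / 2 + s) / 2) x := by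
    have := (((hasDerivAt_id' x).div_const 2).add_const s).cosh.log (cosh_pos _).ne'
    convert this using 1
    rw [tanh_eq_sinh_div_cosh]
    ring
  have hsub := (hlog c).sub (hlog (-c))
  simp only [← sub_eq_add_neg] at hsub
  exact (hsub.congr_deriv (by ring)).congr_of_eventuallyEq
    (.of_forall fun y => zeta_eq_log_cosh_sub y c)

lemma abs_tanh_add_sub_tanh_sub_le (u c : ℝ) :
    |tanh (u + c) - tanh (u - c)| ≤ 2 * |tanh c| := by
  have hprod : cosh (u + c) * cosh (u - c) = cosh c ^ 2 + sinh u ^ 2 := by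
    rw [cosh_add, cosh_sub]
    nlinarith [cosh_sq_sub_sinh_sq c, cosh_sq_sub_sinh_sq u]
  have hdiff : tanh (u + c) - tanh (u - c) = 2 * sinh c * cosh c / (cosh c ^ 2 + sinh u ^ 2) := by
    rw [tanh_eq_sinh_div_cosh, tanh_eq_sinh_div_cosh,
      div_sub_div _ _ (cosh_pos _).ne' (cosh_pos _).ne', ← sinh_sub, hprod,
      show u + c - (u - c) = 2 * c by ring, sinh_two_mul]
  have hc := cosh_pos c
  rw [hdiff, tanh_eq_sinh_div_cosh, abs_div, abs_div, abs_mul, abs_mul, abs_of_pos hc,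
    abs_of_pos (by positivity : (0 : ℝ) < cosh c ^ 2 + sinh u ^ 2), abs_two,
    div_le_iff₀ (by positivity), mul_div_assoc', div_mul_eq_mul_div, le_div_iff₀ hc]
  nlinarith [mul_nonneg (abs_nonneg (sinh c)) (sq_nonneg (sinh u))]

lemma lipschitzWith_zeta (c : ℝ) : LipschitzWith ‖tanh c‖₊ (zeta · c) := by
  refine lipschitzWith_of_nnnorm_deriv_le (fun x => (hasDerivAt_zeta x c).differentiableAt)
    fun x => ?_
  rw [(hasDerivAt_zeta x c).deriv, ← NNReal.coe_le_coe, coe_nnnorm, coe_nnnorm, norm_div,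
    Real.norm_eq_abs, Real.norm_eq_abs, abs_two, div_le_iff₀ two_pos, mul_comm]
  exact abs_tanh_add_sub_tanh_sub_le (x / 2) c

lemma lipschitzWith_gRing {M : ℕ} (a b c : Fin M → ℝ) (j : Fin M) :
    LipschitzWith ‖tanh (c j)‖₊ (gRing a b c j) :=
  LipschitzWith.of_dist_le_mul fun x y => calc
    dist (gRing a b c j x) (gRing a b c j y)
      = dist (zeta (x - a j) (c j)) (zeta (y - a j) (c j)) := dist_sub_left _ _ _
    _ ≤ ‖tanh (c j)‖₊ * dist (x - a j) (y - a j) :=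
        (lipschitzWith_zeta (c j)).dist_le_mul _ _
    _ = ‖tanh (c j)‖₊ * dist x y := by rw [dist_sub_right]

lemma LipschitzWith.foldl_comp {α : Type*} [PseudoEMetricSpace α] {K : NNReal} :
    ∀ {l : List (α → α)}, (∀ f ∈ l, LipschitzWith K f) →
      ∀ {g : α → α} {C : NNReal}, LipschitzWith C g →
        LipschitzWith (K ^ l.length * C) (l.foldl (fun acc f => f ∘ acc) g)
  | [], _, _, _, hg => by simpa using hg
  | f :: l, hl, g, C, hg => by
    rw [List.length_cons, pow_succ, mul_assoc]
    exact foldl_comp (fun f' hf' => hl f' (List.mem_cons_of_mem _ hf'))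
      ((hl f List.mem_cons_self).comp hg)

lemma lipschitzWith_GRing {M : ℕ} (a b c : Fin M → ℝ) {K : NNReal}
    (hK : ∀ j, ‖tanh (c j)‖₊ ≤ K) : LipschitzWith (K ^ M) (GRing a b c) := by
  have hg : ∀ f ∈ List.ofFn (gRing a b c), LipschitzWith K f := by
    simp only [List.mem_ofFn, forall_exists_index, forall_apply_eq_imp_iff]
    exact fun j => (lipschitzWith_gRing a b c j).weaken (hK j)
  simpa [GRing] using LipschitzWith.foldl_comp hg LipschitzWith.id

theorem ring_recursion_converges (M : ℕ) (hM : 0 < M) (a b c : Fin M → ℝ) :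
    ∃ xs : ℝ, GRing a b c xs = xs ∧ (∀ y, GRing a b c y = y → y = xs) ∧
      ∀ x0 : ℝ, Filter.Tendsto (fun k => (GRing a b c)^[k] x0) Filter.atTop (nhds xs) := by
  set K : NNReal := Finset.univ.sup fun j => ‖tanh (c j)‖₊
  have hK : K < 1 := Finset.sup_lt_iff one_pos |>.mpr fun j _ => by
    simpa [← NNReal.coe_lt_coe] using abs_tanh_lt_one (c j)
  have hG : ContractingWith (K ^ M) (GRing a b c) :=
    ⟨pow_lt_one₀ zero_le hK hM.ne',
      lipschitzWith_GRing a b c fun j =>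
        Finset.le_sup (f := fun j => ‖tanh (c j)‖₊) (Finset.mem_univ j)⟩
  exact ⟨hG.fixedPoint _, hG.fixedPoint_isFixedPt, fun y hy => hG.fixedPoint_unique hy,
    hG.tendsto_iterate_fixedPoint⟩
end
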